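/- arXiv:2406.04016 — 8 statements merged into one kernel-verified Lean document; each statement's English description precedes it below -/
import Mathlib

section
/- Let μ_0, μ_1 be Borel probability measures on (0,∞) with ∫ (x + 1/x) dμ_i(x) < ∞ for i = 0,1, and set ν_i = Id_†μ_i. Then ν_0 and ν_1 are Borel probability measures on (0,∞) with finite second moments, and μ_0 ≼_cx μ_1 if and only if ν_0 ≼_cx ν_1. -/
open MeasureTheory Set

/-- The reflected measure `Id_† μ`: the pushforward under `x ↦ 1/x` of the measure
with density `x / m` with respect to `μ`, where `m = ∫ x ∂μ` is the mean of `μ`. -/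
noncomputable def reflect (μ : Measure ℝ) : Measure ℝ :=
  Measure.map (fun x => x⁻¹) (μ.withDensity (fun x => ENNReal.ofReal (x / ∫ y, y ∂μ)))

/-- Convex order: `η ≼_cx ρ` iff `∫ f dη ≤ ∫ f dρ` (with integrals valued in `[0,∞]`)
for every convex function `f : ℝ → [0,∞)`. -/
def ConvexOrder (η ρ : Measure ℝ) : Prop :=
  ∀ f : ℝ → ℝ, ConvexOn ℝ Set.univ f → (∀ x, 0 ≤ f x) →
    ∫⁻ x, ENNReal.ofReal (f x) ∂η ≤ ∫⁻ x, ENNReal.ofReal (f x) ∂ρ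

/-!
For `x > 0` the reflection turns `∫ f dν` into `m⁻¹ ∫ x f(1/x) dμ`, and the perspective
`x f(1/x)` of a ramp `max (a y + b) 0` is again a ramp, `max (b x + a) 0`. A nonnegative convex
function is the increasing limit of finite maxima of countably many ramps, and convex order forces
equal means, so `μ₀ ≼_cx μ₁` gives `ν₀ ≼_cx ν₁` by monotone convergence. On probability measures
on `(0,∞)` with finite mean `Id_†` is an involution, so the converse is the same implication
applied to `ν₀, ν₁`.
-/

open Filter Topology
open scoped ENNReal

def ramp (p : ℝ × ℝ) (y : ℝ) : ℝ := max (p.1 * y + p.2) 0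

theorem ramp_nonneg (p : ℝ × ℝ) (y : ℝ) : 0 ≤ ramp p y := le_max_right _ _

theorem convexOn_ramp (p : ℝ × ℝ) : ConvexOn ℝ univ (ramp p) :=
  ((LinearMap.mul ℝ ℝ p.1).convexOn convex_univ |>.add_const p.2).sup (convexOn_const 0 convex_univ)

theorem continuous_ramp (p : ℝ × ℝ) : Continuous (ramp p) := by
  unfold ramp; fun_prop

theorem mul_ramp_inv (p : ℝ × ℝ) {x : ℝ} (hx : 0 < x) : x * ramp p x⁻¹ = ramp p.swap x := by
  rw [ramp, ramp, mul_max_of_nonneg _ _ hx.le, mul_zero, mul_add, mul_left_comm,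
    mul_inv_cancel₀ hx.ne', mul_one, add_comm, Prod.fst_swap, Prod.snd_swap, mul_comm x]

def rampMax (p : ℕ → ℝ × ℝ) (N : ℕ) : ℝ → ℝ := partialSups (fun n => ramp (p n)) N

section RampMax

variable (p : ℕ → ℝ × ℝ)

theorem rampMax_succ (N : ℕ) : rampMax p (N + 1) = rampMax p N ⊔ ramp (p (N + 1)) :=
  partialSups_succ _ _

theorem ramp_le_rampMax {n N : ℕ} (h : n ≤ N) : ramp (p n) ≤ rampMax p N :=
  le_partialSups_of_le (fun n => ramp (p n)) h

theorem rampMax_le {f : ℝ → ℝ} (h : ∀ n, ramp (p n) ≤ f) (N : ℕ) : rampMax p N ≤ f :=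
  partialSups_le _ _ _ fun n _ => h n

theorem rampMax_nonneg (N : ℕ) (y : ℝ) : 0 ≤ rampMax p N y :=
  (ramp_nonneg _ y).trans (ramp_le_rampMax p le_rfl y)

theorem convexOn_rampMax (N : ℕ) : ConvexOn ℝ univ (rampMax p N) := by
  induction N with
  | zero => simpa [rampMax] using convexOn_ramp (p 0)
  | succ N ih => rw [rampMax_succ]; exact ih.sup (convexOn_ramp _)

theorem continuous_rampMax (N : ℕ) : Continuous (rampMax p N) := by
  induction N with
  | zero => simpa [rampMax] using continuous_ramp (p 0)
  | succ N ih => rw [rampMax_succ]; exact ih.sup (continuous_ramp _)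

theorem mul_rampMax_inv (N : ℕ) {x : ℝ} (hx : 0 < x) :
    x * rampMax p N x⁻¹ = rampMax (Prod.swap ∘ p) N x := by
  induction N with
  | zero => exact mul_ramp_inv (p 0) hx
  | succ N ih =>
    rw [rampMax_succ, rampMax_succ, Pi.sup_apply, Pi.sup_apply, mul_max_of_nonneg _ _ hx.le, ih,
      mul_ramp_inv _ hx]
    rfl

end RampMax

theorem ConvexOn.exists_tendsto_rampMax {f : ℝ → ℝ} (hf : ConvexOn ℝ univ f) (hf0 : ∀ y, 0 ≤ f y) :
    ∃ p : ℕ → ℝ × ℝ, (∀ N, rampMax p N ≤ f) ∧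
      ∀ y, Tendsto (fun N => rampMax p N y) atTop (𝓝 (f y)) := by
  obtain ⟨l, c, hle, hsup⟩ := hf.real_univ_sSup_of_nat_affine_eq
    hf.locallyLipschitz.continuous.lowerSemicontinuous
  have hl : ∀ n y, l n y = l n 1 * y := fun n y => by
    rw [mul_comm, ← smul_eq_mul, ← map_smul, smul_eq_mul, mul_one]
  have hramp : ∀ n, ramp (l n 1, c n) ≤ f := fun n y =>
    max_le (by simpa only [Pi.add_apply, Function.const_apply, hl n y] using hle n y) (hf0 y)
  refine ⟨fun n => (l n 1, c n), rampMax_le _ hramp, fun y => tendsto_order.2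
    ⟨fun a ha => ?_, fun a ha =>
      Eventually.of_forall fun N => (rampMax_le _ hramp N y).trans_lt ha⟩⟩
  rw [← hsup, iSup_apply] at ha
  obtain ⟨n, hn⟩ := exists_lt_of_lt_ciSup ha
  filter_upwards [eventually_ge_atTop n] with N hN
  calc a < l n 1 * y + c n := by rwa [← hl]
    _ ≤ ramp (l n 1, c n) y := le_max_left _ _
    _ ≤ _ := ramp_le_rampMax (fun n => (l n 1, c n)) hN y

theorem tendsto_lintegral_rampMax (μ : Measure ℝ) {f : ℝ → ℝ} {p : ℕ → ℝ × ℝ}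
    (hp : ∀ y, Tendsto (fun N => rampMax p N y) atTop (𝓝 (f y))) :
    Tendsto (fun N => ∫⁻ y, ENNReal.ofReal (rampMax p N y) ∂μ) atTop
      (𝓝 (∫⁻ y, ENNReal.ofReal (f y) ∂μ)) :=
  lintegral_tendsto_of_tendsto_of_monotone
    (fun N => (continuous_rampMax p N).measurable.ennreal_ofReal.aemeasurable)
    (Eventually.of_forall fun y _ _ hNM => ENNReal.ofReal_le_ofReal
      (partialSups_monotone (fun n => ramp (p n)) hNM y))
    (Eventually.of_forall fun y => (ENNReal.continuous_ofReal.tendsto _).comp (hp y))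

namespace ConvexOrder

variable {η ρ : Measure ℝ}

theorem of_rampMax
    (h : ∀ p N, ∫⁻ y, ENNReal.ofReal (rampMax p N y) ∂η ≤ ∫⁻ y, ENNReal.ofReal (rampMax p N y) ∂ρ) :
    ConvexOrder η ρ := by
  intro f hf hf0
  obtain ⟨p, -, hp⟩ := hf.exists_tendsto_rampMax hf0
  exact le_of_tendsto_of_tendsto' (tendsto_lintegral_rampMax η hp) (tendsto_lintegral_rampMax ρ hp)
    (h p)

theorem integral_le (h : ConvexOrder η ρ) {f : ℝ → ℝ} (hf : ConvexOn ℝ univ f) (hf0 : ∀ x, 0 ≤ f x)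
    (hfρ : Integrable f ρ) : ∫ x, f x ∂η ≤ ∫ x, f x ∂ρ := by
  rw [integral_eq_lintegral_of_nonneg_ae (Eventually.of_forall hf0)
      hf.locallyLipschitz.continuous.aestronglyMeasurable,
    integral_eq_lintegral_of_nonneg_ae (Eventually.of_forall hf0) hfρ.aestronglyMeasurable]
  exact ENNReal.toReal_mono hfρ.lintegral_lt_top.ne (h f hf hf0)

end ConvexOrder

theorem tendsto_integral_max_atBot (μ : Measure ℝ) (hμ : Integrable (fun x => x) μ) :
    Tendsto (fun c => ∫ x, max x c ∂μ) atBot (𝓝 (∫ x, x ∂μ)) := by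
  refine tendsto_integral_filter_of_dominated_convergence (fun x => |x|)
    (Eventually.of_forall fun c => (continuous_id.max continuous_const).aestronglyMeasurable)
    ((eventually_le_atBot 0).mono fun c hc => Eventually.of_forall fun x => ?_) hμ.abs
    (Eventually.of_forall fun x => tendsto_const_nhds.congr'
      ((eventually_le_atBot x).mono fun c hc => (max_eq_left hc).symm))
  exact abs_le.2 ⟨(neg_abs_le x).trans (le_max_left x c),
    max_le (le_abs_self x) (hc.trans (abs_nonneg x))⟩

theorem tendsto_integral_min_atTop (μ : Measure ℝ) (hμ : Integrable (fun x => x) μ) :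
    Tendsto (fun c => ∫ x, min x c ∂μ) atTop (𝓝 (∫ x, x ∂μ)) := by
  refine tendsto_integral_filter_of_dominated_convergence (fun x => |x|)
    (Eventually.of_forall fun c => (continuous_id.min continuous_const).aestronglyMeasurable)
    ((eventually_ge_atTop 0).mono fun c hc => Eventually.of_forall fun x => ?_) hμ.abs
    (Eventually.of_forall fun x => tendsto_const_nhds.congr'
      ((eventually_ge_atTop x).mono fun c hc => (min_eq_left hc).symm))
  exact abs_le.2 ⟨le_min (neg_abs_le x) ((neg_nonpos.2 (abs_nonneg x)).trans hc),
    (min_le_left x c).trans (le_abs_self x)⟩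

namespace ConvexOrder

variable {η ρ : Measure ℝ}

theorem integral_max_le [IsProbabilityMeasure η] [IsProbabilityMeasure ρ] (h : ConvexOrder η ρ)
    (hη : Integrable (fun x => x) η) (hρ : Integrable (fun x => x) ρ) (c : ℝ) :
    ∫ x, max x c ∂η ≤ ∫ x, max x c ∂ρ := by
  have hr (x : ℝ) : ramp (1, -c) x = max x c - c := by
    rw [ramp, ← max_sub_sub_right, sub_self, one_mul, sub_eq_add_neg]
  have hη' : Integrable (fun x => max x c) η := hη.sup (integrable_const c)
  have hρ' : Integrable (fun x => max x c) ρ := hρ.sup (integrable_const c)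
  have := h.integral_le (convexOn_ramp (1, -c)) (ramp_nonneg _)
    ((hρ'.sub (integrable_const c)).congr (Eventually.of_forall fun x => (hr x).symm))
  simp_rw [hr] at this
  rw [integral_sub hη' (integrable_const c), integral_sub hρ' (integrable_const c)] at this
  simp only [integral_const, probReal_univ, smul_eq_mul, one_mul] at this
  linarith

theorem integral_min_le [IsProbabilityMeasure η] [IsProbabilityMeasure ρ] (h : ConvexOrder η ρ)
    (hη : Integrable (fun x => x) η) (hρ : Integrable (fun x => x) ρ) (c : ℝ) :
    ∫ x, min x c ∂ρ ≤ ∫ x, min x c ∂η := by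
  have hr (x : ℝ) : ramp (-1, c) x = c - min x c := by
    rw [ramp, ← max_sub_sub_left, sub_self, neg_one_mul, neg_add_eq_sub]
  have hη' : Integrable (fun x => min x c) η := hη.inf (integrable_const c)
  have hρ' : Integrable (fun x => min x c) ρ := hρ.inf (integrable_const c)
  have := h.integral_le (convexOn_ramp (-1, c)) (ramp_nonneg _)
    (((integrable_const c).sub hρ').congr (Eventually.of_forall fun x => (hr x).symm))
  simp_rw [hr] at this
  rw [integral_sub (integrable_const c) hη', integral_sub (integrable_const c) hρ'] at this
  simp only [integral_const, probReal_univ, smul_eq_mul, one_mul] at this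
  linarith

theorem integral_id_eq [IsProbabilityMeasure η] [IsProbabilityMeasure ρ] (h : ConvexOrder η ρ)
    (hη : Integrable (fun x => x) η) (hρ : Integrable (fun x => x) ρ) :
    ∫ x, x ∂η = ∫ x, x ∂ρ :=
  le_antisymm
    (le_of_tendsto_of_tendsto' (tendsto_integral_max_atBot η hη)
      (tendsto_integral_max_atBot ρ hρ) (h.integral_max_le hη hρ))
    (le_of_tendsto_of_tendsto' (tendsto_integral_min_atTop ρ hρ)
      (tendsto_integral_min_atTop η hη) (h.integral_min_le hη hρ))

end ConvexOrder

section Reflect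

variable {μ : Measure ℝ}

theorem integral_id_pos [NeZero μ] (hμ : ∀ᵐ x ∂μ, 0 < x) (hint : Integrable (fun x => x) μ) :
    0 < ∫ x, x ∂μ := by
  refine (integral_pos_iff_support_of_nonneg_ae (hμ.mono fun x hx => hx.le) hint).2
    (pos_iff_ne_zero.2 fun h => ?_)
  obtain ⟨x, hx, hx0⟩ := (hμ.and (measure_eq_zero_iff_ae_notMem.1 h)).exists
  exact hx0 hx.ne'

theorem integrable_id_and_inv_of_integrable_add (hμ : ∀ᵐ x ∂μ, 0 < x)
    (hint : Integrable (fun x => x + x⁻¹) μ) :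
    Integrable (fun x => x) μ ∧ Integrable (fun x => x⁻¹) μ :=
  (integrable_add_iff_of_nonneg aestronglyMeasurable_id (hμ.mono fun _ hx => hx.le)
    (hμ.mono fun _ hx => (inv_pos.2 hx).le)).1 hint

theorem lintegral_reflect {g : ℝ → ℝ≥0∞} (hg : Measurable g) :
    ∫⁻ y, g y ∂reflect μ = ∫⁻ x, ENNReal.ofReal (x / ∫ y, y ∂μ) * g x⁻¹ ∂μ := by
  rw [reflect, lintegral_map hg measurable_inv]
  exact lintegral_withDensity_eq_lintegral_mul _ (by fun_prop) (hg.comp measurable_inv)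

theorem lintegral_ofReal_reflect (hμ : ∀ᵐ x ∂μ, 0 < x) {F : ℝ → ℝ} (hF : Measurable F) :
    ∫⁻ y, ENNReal.ofReal (F y) ∂reflect μ = ∫⁻ x, ENNReal.ofReal (x * F x⁻¹ / ∫ y, y ∂μ) ∂μ := by
  have hm : 0 ≤ ∫ y, y ∂μ := integral_nonneg_of_ae (hμ.mono fun x hx => hx.le)
  rw [lintegral_reflect hF.ennreal_ofReal]
  refine lintegral_congr_ae ?_
  filter_upwards [hμ] with x hx
  rw [← ENNReal.ofReal_mul (div_nonneg hx.le hm), div_mul_eq_mul_div, mul_div_right_comm]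

theorem ae_pos_reflect (hμ : ∀ᵐ x ∂μ, 0 < x) : ∀ᵐ y ∂reflect μ, 0 < y :=
  (ae_map_iff measurable_inv.aemeasurable measurableSet_Ioi).2
    ((withDensity_absolutelyContinuous _ _).ae_le (hμ.mono fun _ hx => inv_pos.2 hx))

theorem lintegral_ofReal_id_reflect [IsProbabilityMeasure μ] (hμ : ∀ᵐ x ∂μ, 0 < x) :
    ∫⁻ y, ENNReal.ofReal y ∂reflect μ = ENNReal.ofReal (∫ x, x ∂μ)⁻¹ := by
  rw [lintegral_ofReal_reflect hμ (F := fun y => y) measurable_id, ← one_div,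
    ← mul_one (ENNReal.ofReal _), ← measure_univ (μ := μ), ← lintegral_const]
  refine lintegral_congr_ae ?_
  filter_upwards [hμ] with x hx
  rw [mul_inv_cancel₀ hx.ne']

theorem integrable_id_reflect [IsProbabilityMeasure μ] (hμ : ∀ᵐ x ∂μ, 0 < x) :
    Integrable (fun y => y) (reflect μ) := by
  refine ⟨aestronglyMeasurable_id, ?_⟩
  rw [hasFiniteIntegral_iff_ofReal ((ae_pos_reflect hμ).mono fun _ hy => hy.le),
    lintegral_ofReal_id_reflect hμ]
  exact ENNReal.ofReal_lt_top

theorem integral_id_reflect [IsProbabilityMeasure μ] (hμ : ∀ᵐ x ∂μ, 0 < x) :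
    ∫ y, y ∂reflect μ = (∫ x, x ∂μ)⁻¹ := by
  rw [integral_eq_lintegral_of_nonneg_ae ((ae_pos_reflect hμ).mono fun _ hy => hy.le)
    aestronglyMeasurable_id, lintegral_ofReal_id_reflect hμ,
    ENNReal.toReal_ofReal (inv_nonneg.2 (integral_nonneg_of_ae (hμ.mono fun x hx => hx.le)))]

theorem isProbabilityMeasure_reflect [IsProbabilityMeasure μ] (hμ : ∀ᵐ x ∂μ, 0 < x)
    (hint : Integrable (fun x => x) μ) : IsProbabilityMeasure (reflect μ) := by
  have hm := integral_id_pos hμ hint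
  constructor
  calc reflect μ univ = ∫⁻ _, ENNReal.ofReal 1 ∂reflect μ := by simp
    _ = ∫⁻ x, ENNReal.ofReal (x * 1 / ∫ y, y ∂μ) ∂μ := lintegral_ofReal_reflect hμ measurable_const
    _ = ENNReal.ofReal (∫ x, x * 1 / ∫ y, y ∂μ ∂μ) :=
      (ofReal_integral_eq_lintegral_ofReal (by simpa using hint.div_const _)
        (hμ.mono fun x hx => by positivity)).symm
    _ = 1 := by simp [integral_div, hm.ne']

theorem integrable_sq_reflect (hμ : ∀ᵐ x ∂μ, 0 < x) (hinv : Integrable (fun x => x⁻¹) μ) :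
    Integrable (fun y => y ^ 2) (reflect μ) := by
  refine ⟨(continuous_pow 2).aestronglyMeasurable, ?_⟩
  rw [hasFiniteIntegral_iff_ofReal (Eventually.of_forall fun y => sq_nonneg y),
    lintegral_ofReal_reflect hμ (F := fun y => y ^ 2) (measurable_id.pow_const 2)]
  refine lt_of_eq_of_lt (lintegral_congr_ae ?_) (hinv.div_const (∫ y, y ∂μ)).lintegral_lt_top
  filter_upwards [hμ] with x hx
  field_simp

theorem reflect_reflect [IsProbabilityMeasure μ] (hμ : ∀ᵐ x ∂μ, 0 < x)
    (hint : Integrable (fun x => x) μ) : reflect (reflect μ) = μ := by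
  have hm := integral_id_pos hμ hint
  refine Measure.ext_of_lintegral _ fun g hg => ?_
  rw [lintegral_reflect hg, lintegral_reflect (by fun_prop), integral_id_reflect hμ]
  refine lintegral_congr_ae ?_
  filter_upwards [hμ] with x hx
  rw [inv_inv, ← mul_assoc, ← ENNReal.ofReal_mul (div_nonneg hx.le hm.le),
    div_mul_div_comm, mul_inv_cancel₀ hx.ne', mul_inv_cancel₀ hm.ne', div_one, ENNReal.ofReal_one,
    one_mul]

theorem lintegral_ofReal_rampMax_reflect (hμ : ∀ᵐ x ∂μ, 0 < x) (p : ℕ → ℝ × ℝ) (N : ℕ) :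
    ∫⁻ y, ENNReal.ofReal (rampMax p N y) ∂reflect μ =
      ∫⁻ x, ENNReal.ofReal ((∫ y, y ∂μ)⁻¹ * rampMax (Prod.swap ∘ p) N x) ∂μ := by
  rw [lintegral_ofReal_reflect hμ (continuous_rampMax p N).measurable]
  refine lintegral_congr_ae ?_
  filter_upwards [hμ] with x hx
  rw [mul_rampMax_inv p N hx, inv_mul_eq_div]

end Reflect

theorem ConvexOrder.reflect {μ₀ μ₁ : Measure ℝ} [IsProbabilityMeasure μ₀] [IsProbabilityMeasure μ₁]
    (hμ₀ : ∀ᵐ x ∂μ₀, 0 < x) (hμ₁ : ∀ᵐ x ∂μ₁, 0 < x) (hint₀ : Integrable (fun x => x) μ₀)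
    (hint₁ : Integrable (fun x => x) μ₁) (h : ConvexOrder μ₀ μ₁) :
    ConvexOrder (reflect μ₀) (reflect μ₁) := by
  refine ConvexOrder.of_rampMax fun p N => ?_
  have hm : 0 ≤ (∫ x, x ∂μ₁)⁻¹ :=
    inv_nonneg.2 (integral_nonneg_of_ae (hμ₁.mono fun _ hx => hx.le))
  rw [lintegral_ofReal_rampMax_reflect hμ₀, lintegral_ofReal_rampMax_reflect hμ₁,
    h.integral_id_eq hint₀ hint₁]
  exact h _ ((convexOn_rampMax _ N).smul hm) fun x => mul_nonneg hm (rampMax_nonneg _ N x)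

/-- For Borel probability measures `μ₀, μ₁` on `(0,∞)` with `∫ (x + 1/x) dμᵢ < ∞` and
`νᵢ = Id_† μᵢ`, the measures `ν₀, ν₁` are Borel probability measures on `(0,∞)` with
finite second moments, and `μ₀ ≼_cx μ₁` iff `ν₀ ≼_cx ν₁`. -/
theorem stmt3 (μ₀ μ₁ : Measure ℝ) [IsProbabilityMeasure μ₀] [IsProbabilityMeasure μ₁]
    (hsupp₀ : μ₀ (Set.Ioi (0:ℝ))ᶜ = 0) (hsupp₁ : μ₁ (Set.Ioi (0:ℝ))ᶜ = 0)
    (hint₀ : Integrable (fun x => x + x⁻¹) μ₀)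
    (hint₁ : Integrable (fun x => x + x⁻¹) μ₁) :
    IsProbabilityMeasure (reflect μ₀) ∧ IsProbabilityMeasure (reflect μ₁) ∧
    (reflect μ₀) (Set.Ioi (0:ℝ))ᶜ = 0 ∧ (reflect μ₁) (Set.Ioi (0:ℝ))ᶜ = 0 ∧
    Integrable (fun x => x ^ 2) (reflect μ₀) ∧ Integrable (fun x => x ^ 2) (reflect μ₁) ∧
    (ConvexOrder μ₀ μ₁ ↔ ConvexOrder (reflect μ₀) (reflect μ₁)) := by
  have hpos₀ : ∀ᵐ x ∂μ₀, 0 < x := hsupp₀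
  have hpos₁ : ∀ᵐ x ∂μ₁, 0 < x := hsupp₁
  obtain ⟨hid₀, hinv₀⟩ := integrable_id_and_inv_of_integrable_add hpos₀ hint₀
  obtain ⟨hid₁, hinv₁⟩ := integrable_id_and_inv_of_integrable_add hpos₁ hint₁
  have := isProbabilityMeasure_reflect hpos₀ hid₀
  have := isProbabilityMeasure_reflect hpos₁ hid₁
  refine ⟨inferInstance, inferInstance, ae_pos_reflect hpos₀, ae_pos_reflect hpos₁,
    integrable_sq_reflect hpos₀ hinv₀, integrable_sq_reflect hpos₁ hinv₁,
    fun h => h.reflect hpos₀ hpos₁ hid₀ hid₁, fun h => ?_⟩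
  rw [← reflect_reflect hpos₀ hid₀, ← reflect_reflect hpos₁ hid₁]
  exact h.reflect (ae_pos_reflect hpos₀) (ae_pos_reflect hpos₁) (integrable_id_reflect hpos₀)
    (integrable_id_reflect hpos₁)
end

section
/- Let μ_0, μ_1 be Borel probability measures on (0,∞) with finite first moments and a common mean m = ∫ x dμ_0(x) = ∫ x dμ_1(x) ∈ (0,∞), and set ν_i = Id_†μ_i. Then for every z > 0, U_{ν_0}(z) < U_{ν_1}(z) if and only if U_{μ_0}(1/z) < U_{μ_1}(1/z). -/
open MeasureTheory Set

/-- The potential function of a measure `ρ` on `ℝ`: `U_ρ(z) = ∫ |x - z| dρ(x)`. -/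
noncomputable def potential (ρ : Measure ℝ) (z : ℝ) : ℝ := ∫ x, |x - z| ∂ρ

lemma key (μ : Measure ℝ) [IsProbabilityMeasure μ] (hsupp : μ (Set.Ioi (0:ℝ))ᶜ = 0)
    (hm : 0 < ∫ x, x ∂μ) (z : ℝ) (hz : 0 < z) :
    potential (reflect μ) z = (z / ∫ x, x ∂μ) * potential μ (1/z) := by
  set m := ∫ x, x ∂μ with hmdef
  have hμae : ∀ᵐ x ∂μ, 0 < x := by
    rw [ae_iff]
    have : {x : ℝ | ¬ 0 < x} = (Set.Ioi (0:ℝ))ᶜ := by ext x; simp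
    rw [this, hsupp]
  unfold potential reflect
  rw [integral_map (by fun_prop)
    (Continuous.aestronglyMeasurable (by continuity))]
  have hof : (fun x : ℝ => ENNReal.ofReal (x / m)) =
      fun x => ((x / m).toNNReal : ENNReal) := by
    ext x; simp [ENNReal.ofReal]
  rw [hof, integral_withDensity_eq_integral_smul (by fun_prop)]
  rw [show (z / m) * ∫ x, |x - 1/z| ∂μ = ∫ x, (z/m) * |x - 1/z| ∂μ from
    (integral_const_mul _ _).symm]
  refine integral_congr_ae (hμae.mono fun x hx => ?_)
  have hxm : (0:ℝ) ≤ x / m := div_nonneg hx.le hm.le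
  simp only [NNReal.smul_def, smul_eq_mul]
  rw [Real.coe_toNNReal _ hxm]
  have h1 : x * (x⁻¹ - z) = 1 - x * z := by field_simp
  have h2 : z * (x - 1/z) = x * z - 1 := by field_simp
  have hx0 : |x⁻¹ - z| = |1 - x * z| / x := by
    rw [← h1, abs_mul, abs_of_pos hx]; field_simp
  have hz0 : |x - 1/z| = |x * z - 1| / z := by
    rw [← h2, abs_mul, abs_of_pos hz]; field_simp
  rw [hx0, hz0, abs_sub_comm]
  field_simp

/-- For Borel probability measures `μ₀, μ₁` on `(0,∞)` with finite first moments and a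
common mean `m ∈ (0,∞)`, and `νᵢ = Id_† μᵢ`, for every `z > 0` we have
`U_{ν₀}(z) < U_{ν₁}(z)` iff `U_{μ₀}(1/z) < U_{μ₁}(1/z)`. -/
theorem stmt4 (μ₀ μ₁ : Measure ℝ) [IsProbabilityMeasure μ₀] [IsProbabilityMeasure μ₁]
    (hsupp₀ : μ₀ (Set.Ioi (0:ℝ))ᶜ = 0) (hsupp₁ : μ₁ (Set.Ioi (0:ℝ))ᶜ = 0)
    (hint₀ : Integrable (fun x => x) μ₀) (hint₁ : Integrable (fun x => x) μ₁)
    (hmean : 0 < ∫ x, x ∂μ₀)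
    (hcommon : ∫ x, x ∂μ₀ = ∫ x, x ∂μ₁) :
    ∀ z : ℝ, 0 < z →
      (potential (reflect μ₀) z < potential (reflect μ₁) z
        ↔ potential μ₀ (1 / z) < potential μ₁ (1 / z)) := by
  intro z hz
  rw [key μ₀ hsupp₀ hmean z hz, key μ₁ hsupp₁ (hcommon ▸ hmean) z hz, ← hcommon]
  exact mul_lt_mul_iff_right₀ (div_pos hz hmean)
end

section
/- Let (Ω, ℱ, P) be a probability space, 𝒢 ⊆ ℱ a sub-σ-algebra, and S_1 : Ω → ℝ an integrable random variable with S_1 > 0 P-almost surely and mean m = E_P[S_1] ∈ (0,∞). Let S_0 := E_P[S_1 | 𝒢] and let μ_0 denote the law of S_0 under P. Define the probability measure P̃ := (S_1/m)·P. Then S_0 > 0 P-almost surely, μ_0 is a Borel probability measure on (0,∞) with mean m, and the law of the random variable m/S_0 under P̃ equals Id_‡μ_0. -/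
/-! On the event `{S₀ ≤ 0} ∈ 𝒢` the integrals of `S₀ ≤ 0` and of `S₁ > 0` coincide, so the event is
null. Since `m / S₀` is `𝒢`-measurable and `(S₁ / m) · P`, `(S₀ / m) · P` agree on `𝒢`, the law of
`m / S₀` is the same under both; under `(S₀ / m) · P` it is `Id_‡ μ₀` by unwinding the pushforwards
`x ↦ x / m` and `x ↦ 1 / x` in the definition of `Id_‡`. -/

open MeasureTheory Set

/-- The normalised reflected measure `Id_‡ μ := Id_† μ̃`, where `μ̃` is the pushforward
of `μ` under `x ↦ x/m` and `m = ∫ x ∂μ`. -/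
noncomputable def reflectNorm (μ : Measure ℝ) : Measure ℝ :=
  reflect (Measure.map (fun x => x / ∫ y, y ∂μ) μ)

namespace MeasureTheory

variable {Ω : Type*} {m m0 : MeasurableSpace Ω} {μ : Measure Ω}

theorem condExp_pos (hm : m ≤ m0) [SigmaFinite (μ.trim hm)] {f : Ω → ℝ} (hf : Integrable f μ)
    (hpos : ∀ᵐ ω ∂μ, 0 < f ω) : ∀ᵐ ω ∂μ, 0 < μ[f | m] ω := by
  set A := {ω | μ[f | m] ω ≤ 0}
  have hAm : MeasurableSet[m] A :=
    measurableSet_le stronglyMeasurable_condExp.measurable measurable_const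
  have hf_nonneg : 0 ≤ᵐ[μ.restrict A] f := ae_restrict_of_ae (hpos.mono fun _ h => h.le)
  have hint_zero : ∫ ω in A, f ω ∂μ = 0 := by
    refine le_antisymm ?_ (integral_nonneg_of_ae hf_nonneg)
    rw [← setIntegral_condExp hm hf hAm]
    exact setIntegral_nonpos (hm A hAm) fun _ h => h
  have hf_zero := (setIntegral_eq_zero_iff_of_nonneg_ae hf_nonneg hf.integrableOn).mp hint_zero
  have hA_null : μ.restrict A = 0 := by
    rw [← ae_eq_bot, ← Filter.eventually_false_iff_eq_bot]
    filter_upwards [hf_zero, ae_restrict_of_ae hpos] with ω h0 hpos using hpos.ne' h0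
  rw [ae_iff]
  simpa only [A, not_lt] using Measure.restrict_eq_zero.mp hA_null

theorem map_withDensity_condExp (hm : m ≤ m0) [SigmaFinite (μ.trim hm)] {f : Ω → ℝ}
    (hf : Integrable f μ) (hf_nonneg : 0 ≤ᵐ[μ] f) {β : Type*} [MeasurableSpace β] {X : Ω → β}
    (hX : Measurable[m] X) :
    (μ.withDensity fun ω => ENNReal.ofReal (f ω)).map X
      = (μ.withDensity fun ω => ENNReal.ofReal (μ[f | m] ω)).map X := by
  ext s hs
  have hXs : MeasurableSet (X ⁻¹' s) := hm _ (hX hs)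
  rw [Measure.map_apply (hX.mono hm le_rfl) hs, Measure.map_apply (hX.mono hm le_rfl) hs,
    withDensity_apply _ hXs, withDensity_apply _ hXs,
    ← ofReal_integral_eq_lintegral_ofReal hf.restrict (ae_restrict_of_ae hf_nonneg),
    ← ofReal_integral_eq_lintegral_ofReal integrable_condExp.restrict
      (ae_restrict_of_ae (condExp_nonneg hf_nonneg)),
    setIntegral_condExp hm hf (hX hs)]

theorem withDensity_map {β : Type*} [MeasurableSpace β] {f : Ω → β} (hf : Measurable f)
    {g : β → ENNReal} (hg : Measurable g) :
    (μ.map f).withDensity g = (μ.withDensity (g ∘ f)).map f := by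
  ext s hs
  rw [withDensity_apply _ hs, Measure.map_apply hf hs, withDensity_apply _ (hf hs),
    Measure.restrict_map hf hs, lintegral_map hg hf]
  rfl

end MeasureTheory

theorem reflectNorm_eq_map_withDensity (ν : Measure ℝ) (hν : ∫ x, x ∂ν ≠ 0) :
    reflectNorm ν
      = (ν.withDensity fun x => ENNReal.ofReal (x / ∫ y, y ∂ν)).map fun x => (∫ y, y ∂ν) / x := by
  set c := ∫ y, y ∂ν
  have hmeas : Measurable fun x : ℝ => x / c := measurable_div_const c
  have hmean_one : ∫ y, y ∂(ν.map fun x => x / c) = 1 := by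
    rw [integral_map hmeas.aemeasurable measurable_id'.aestronglyMeasurable, integral_div,
      div_self hν]
  rw [reflectNorm, reflect, hmean_one]
  simp only [div_one]
  rw [withDensity_map hmeas ENNReal.measurable_ofReal, Measure.map_map measurable_inv hmeas]
  simp only [Function.comp_def, inv_div]

theorem reflectNorm_map {Ω : Type*} [MeasurableSpace Ω] {P : Measure Ω} {X : Ω → ℝ}
    (hX : Measurable X) (hmean : ∫ ω, X ω ∂P ≠ 0) :
    reflectNorm (P.map X)
      = (P.withDensity fun ω => ENNReal.ofReal (X ω / ∫ ω, X ω ∂P)).map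
          fun ω => (∫ ω, X ω ∂P) / X ω := by
  have hlaw : ∫ x, x ∂(P.map X) = ∫ ω, X ω ∂P :=
    integral_map hX.aemeasurable measurable_id'.aestronglyMeasurable
  rw [reflectNorm_eq_map_withDensity _ (hlaw ▸ hmean), hlaw,
    withDensity_map (g := fun x => ENNReal.ofReal (x / ∫ ω, X ω ∂P)) hX (by fun_prop),
    Measure.map_map (g := fun x => (∫ ω, X ω ∂P) / x) (by fun_prop) hX]
  rfl

/-- Let `S₁ > 0` a.s. be integrable with mean `m ∈ (0,∞)`, `𝒢 ⊆ ℱ` a sub-σ-algebra,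
`S₀ = E_P[S₁|𝒢]` with law `μ₀`, and `P̃ := (S₁/m)·P`. Then `S₀ > 0` a.s., `μ₀` is a
Borel probability measure on `(0,∞)` with mean `m`, and the law of `m/S₀` under `P̃`
equals `Id_‡ μ₀`. -/
theorem stmt9 {Ω : Type*} (𝒢 : MeasurableSpace Ω) {m0 : MeasurableSpace Ω}
    (P : @Measure Ω m0) [IsProbabilityMeasure P] (h𝒢 : 𝒢 ≤ m0)
    (S₁ : Ω → ℝ) (hint : Integrable S₁ P) (hpos : ∀ᵐ ω ∂P, 0 < S₁ ω)
    (m : ℝ) (hm : m = ∫ ω, S₁ ω ∂P) (hmpos : 0 < m)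
    (S₀ : Ω → ℝ) (hS₀ : S₀ = P[S₁ | 𝒢])
    (μ₀ : Measure ℝ) (hμ₀ : μ₀ = P.map S₀) :
    (∀ᵐ ω ∂P, 0 < S₀ ω) ∧
    IsProbabilityMeasure μ₀ ∧
    μ₀ (Set.Ioi (0:ℝ))ᶜ = 0 ∧
    (∫ x, x ∂μ₀) = m ∧
    (P.withDensity (fun ω => ENNReal.ofReal (S₁ ω / m))).map (fun ω => m / S₀ ω)
      = reflectNorm μ₀ := by
  have hS₀m𝒢 : Measurable[𝒢] S₀ := hS₀ ▸ stronglyMeasurable_condExp.measurable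
  have hS₀m : Measurable S₀ := hS₀m𝒢.mono h𝒢 le_rfl
  have hS₀pos : ∀ᵐ ω ∂P, 0 < S₀ ω := hS₀ ▸ condExp_pos h𝒢 hint hpos
  have hS₀mean : ∫ ω, S₀ ω ∂P = m := by rw [hS₀, integral_condExp h𝒢, hm]
  have hcond : P[fun ω => S₁ ω / m | 𝒢] =ᵐ[P] fun ω => S₀ ω / m := by
    simp only [div_eq_inv_mul, hS₀]
    exact condExp_smul m⁻¹ S₁ 𝒢
  subst hμ₀
  refine ⟨hS₀pos, Measure.isProbabilityMeasure_map hS₀m.aemeasurable, ?_, ?_, ?_⟩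
  · rw [Measure.map_apply hS₀m measurableSet_Ioi.compl]
    exact ae_iff.mp hS₀pos
  · rw [integral_map hS₀m.aemeasurable measurable_id'.aestronglyMeasurable, hS₀mean]
  · rw [reflectNorm_map hS₀m (hS₀mean ▸ hmpos.ne'), hS₀mean,
      map_withDensity_condExp h𝒢 (hint.div_const m)
        (hpos.mono fun ω h => (div_pos h hmpos).le) (hS₀m𝒢.const_div m)]
    exact congrArg _ (withDensity_congr_ae (hcond.fun_comp ENNReal.ofReal))
end

section
/- Let σ > 0 and let μ be the pushforward under the exponential map x ↦ e^x of the Gaussian measure on ℝ with mean −σ²/2 and variance σ² (i.e. μ is the lognormal law of S_1 for a geometric Brownian motion started at 1 with volatility σ). Then μ is a Borel probability measure on (0,∞) with ∫ x dμ(x) = 1, and Id_†μ = μ; that is, the lognormal measure μ is a fixed point of the reflection operator Id_†. -/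
open MeasureTheory Set
open scoped ENNReal NNReal

lemma withDensity_map_aux {g : ℝ → ℝ} (hg : Measurable g) {f : ℝ → ℝ≥0∞}
    (hf : Measurable f) (μ : Measure ℝ) :
    (μ.map g).withDensity f = (μ.withDensity (fun x => f (g x))).map g := by
  ext s hs
  rw [withDensity_apply _ hs, Measure.map_apply hg hs, setLIntegral_map hs hf hg,
    withDensity_apply _ (hg hs)]

lemma gaussianPDFReal_mul_exp (σ : ℝ) (hσ : 0 < σ) (x : ℝ) :
    ProbabilityTheory.gaussianPDFReal (-σ ^ 2 / 2) (Real.toNNReal (σ ^ 2)) x * Real.exp x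
      = ProbabilityTheory.gaussianPDFReal (σ ^ 2 / 2) (Real.toNNReal (σ ^ 2)) x := by
  have hc : ((Real.toNNReal (σ ^ 2) : ℝ≥0) : ℝ) = σ ^ 2 :=
    Real.coe_toNNReal _ (sq_nonneg σ)
  have hσ2 : (σ : ℝ) ^ 2 ≠ 0 := pow_ne_zero _ hσ.ne'
  unfold ProbabilityTheory.gaussianPDFReal
  rw [hc, mul_assoc, ← Real.exp_add]
  congr 2
  field_simp
  ring

/-- Let `μ` be the lognormal law: the pushforward under `exp` of the Gaussian with mean
`-σ²/2` and variance `σ²`. Then `μ` is a Borel probability measure on `(0,∞)` with mean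
`1`, and `Id_† μ = μ`: the lognormal measure is a fixed point of the reflection. -/
theorem stmt10 (σ : ℝ) (hσ : 0 < σ)
    (μ : Measure ℝ)
    (hμ : μ = (ProbabilityTheory.gaussianReal (-σ ^ 2 / 2) (Real.toNNReal (σ ^ 2))).map
      Real.exp) :
    IsProbabilityMeasure μ ∧
    μ (Set.Ioi (0:ℝ))ᶜ = 0 ∧
    (∫ x, x ∂μ) = 1 ∧
    reflect μ = μ := by
  have hσ2 : (σ : ℝ) ^ 2 ≠ 0 := pow_ne_zero _ hσ.ne'
  set v : ℝ≥0 := Real.toNNReal (σ ^ 2) with hv_def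
  have hv : v ≠ 0 := by
    simp only [hv_def, ne_eq, Real.toNNReal_eq_zero, not_le]
    positivity
  set γ := ProbabilityTheory.gaussianReal (-σ ^ 2 / 2) v with hγ_def
  have hexp : Measurable Real.exp := Real.continuous_exp.measurable
  -- probability measure
  have hprob : IsProbabilityMeasure μ := by
    rw [hμ]; exact Measure.isProbabilityMeasure_map hexp.aemeasurable
  -- support
  have hsupp : μ (Set.Ioi (0:ℝ))ᶜ = 0 := by
    rw [hμ, Measure.map_apply hexp measurableSet_Ioi.compl]
    have : Real.exp ⁻¹' (Set.Ioi (0:ℝ))ᶜ = ∅ := by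
      ext x; simp [Real.exp_pos x]
    rw [this]; simp
  -- key density identity
  have hdens : γ.withDensity (fun x => ENNReal.ofReal (Real.exp x))
      = ProbabilityTheory.gaussianReal (σ ^ 2 / 2) v := by
    rw [hγ_def, ProbabilityTheory.gaussianReal_of_var_ne_zero _ hv,
      ProbabilityTheory.gaussianReal_of_var_ne_zero _ hv,
      ← withDensity_mul _ (ProbabilityTheory.measurable_gaussianPDF _ _)
        (hexp.ennreal_ofReal)]
    congr 1
    ext x
    simp only [Pi.mul_apply, ProbabilityTheory.gaussianPDF]
    rw [← ENNReal.ofReal_mul (ProbabilityTheory.gaussianPDFReal_nonneg _ _ _),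
      gaussianPDFReal_mul_exp σ hσ x]
  -- mean computation
  haveI : IsProbabilityMeasure γ := inferInstance
  have hmean : (∫ x, x ∂μ) = 1 := by
    rw [hμ, integral_map (f := fun x : ℝ => x) hexp.aemeasurable measurable_id.aestronglyMeasurable]
    rw [integral_eq_lintegral_of_nonneg_ae
      (Filter.Eventually.of_forall fun x => (Real.exp_pos x).le)
      hexp.aestronglyMeasurable]
    have : ∫⁻ x, ENNReal.ofReal (Real.exp x) ∂γ
        = γ.withDensity (fun x => ENNReal.ofReal (Real.exp x)) Set.univ := by
      rw [withDensity_apply _ MeasurableSet.univ, Measure.restrict_univ]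
    rw [this, hdens]
    haveI : IsProbabilityMeasure (ProbabilityTheory.gaussianReal (σ ^ 2 / 2) v) :=
      inferInstance
    simp [measure_univ]
  refine ⟨hprob, hsupp, hmean, ?_⟩
  -- reflection
  unfold reflect
  rw [hmean]
  have hfun : (fun x : ℝ => ENNReal.ofReal (x / 1)) = fun x => ENNReal.ofReal x := by
    funext x; rw [div_one]
  rw [hfun, hμ, withDensity_map_aux hexp ENNReal.measurable_ofReal]
  rw [hdens]
  rw [Measure.map_map measurable_inv hexp]
  have hcomp : ((fun x : ℝ => x⁻¹) ∘ Real.exp) = Real.exp ∘ (fun x : ℝ => -x) := by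
    funext x; simp [Real.exp_neg]
  rw [hcomp, ← Measure.map_map hexp measurable_neg]
  have hneg : (ProbabilityTheory.gaussianReal (σ ^ 2 / 2) v).map (fun x : ℝ => -x) = γ := by
    have : (fun x : ℝ => -x) = (fun x : ℝ => (-1 : ℝ) * x) := by funext x; ring
    rw [this, ProbabilityTheory.gaussianReal_map_const_mul (-1 : ℝ)]
    rw [hγ_def]
    congr 1
    · ring
    · ext
      simp
  rw [hneg]
end

section
/- Let σ̄ > 0 and let u : (0,1) × (0,∞) → ℝ be such that at every point (t,s) the partial derivatives ∂_t u(t,s), ∂_s u(t,s) and ∂_{ss} u(t,s) exist, s²∂_{ss}u(t,s) < 1, and u satisfies the equation ∂_t u(t,s) + (σ̄²/2) · s²∂_{ss}u(t,s) / (1 − s²∂_{ss}u(t,s)) = 0. Define v(t,s) := (−u(t,s) − log s + σ̄² t/2)/σ̄. Then for every (t,s) ∈ (0,1) × (0,∞): s²∂_{ss}v(t,s) = (1 − s²∂_{ss}u(t,s))/σ̄ > 0, and v satisfies ∂_t v(t,s) − 1/(2 s² ∂_{ss}v(t,s)) = 0. -/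
open Set

/-!
The substitution is explicit, so everything is computed pointwise: with `X = s²∂ₛₛu`,
`s²∂ₛₛv = (1 - X)/σ̄` because `log` contributes `1/s²` to the second derivative, and the
equation for `u` gives `σ̄ ∂ₜv = σ̄²/2 - ∂ₜu = σ̄²/(2(1 - X)) = σ̄/(2 s²∂ₛₛv)`.
-/

theorem HasDerivAt.neg_sub_const_add_mul_div {f : ℝ → ℝ} {f' t : ℝ} (hf : HasDerivAt f f' t)
    (c a σ : ℝ) :
    HasDerivAt (fun τ => (-f τ - c + a * τ / 2) / σ) ((-f' + a / 2) / σ) t := by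
  have h := (hf.neg.sub_const c).add (((hasDerivAt_id t).const_mul a).div_const 2)
  exact (h.congr_deriv (by ring)).div_const σ

theorem HasDerivAt.neg_sub_log_add_const_div {f : ℝ → ℝ} {f' s : ℝ} (hf : HasDerivAt f f' s)
    (hs : s ≠ 0) (c σ : ℝ) :
    HasDerivAt (fun x => (-f x - Real.log x + c) / σ) ((-f' - 1 / s) / σ) s := by
  have h := (hf.neg.sub (Real.hasDerivAt_log hs)).add_const c
  exact (h.congr_deriv (by rw [one_div])).div_const σ

theorem HasDerivAt.neg_sub_one_div_div {f : ℝ → ℝ} {f' s : ℝ} (hf : HasDerivAt f f' s)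
    (hs : s ≠ 0) (σ : ℝ) :
    HasDerivAt (fun x => (-f x - 1 / x) / σ) ((-f' + 1 / s ^ 2) / σ) s := by
  have hinv : HasDerivAt (fun x : ℝ => 1 / x) (-(1 / s ^ 2)) s := by
    simpa only [one_div] using hasDerivAt_inv hs
  exact ((hf.neg.sub hinv).congr_deriv (by ring)).div_const σ

theorem sq_mul_neg_add_one_div_sq_div {s : ℝ} (hs : s ≠ 0) (a σ : ℝ) :
    s ^ 2 * ((-a + 1 / s ^ 2) / σ) = (1 - s ^ 2 * a) / σ := by
  field_simp
  ring

theorem neg_add_half_sq_div_sub_one_div_eq_zero {σ X b : ℝ} (hX : X ≠ 1)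
    (hb : b + σ ^ 2 / 2 * X / (1 - X) = 0) :
    (-b + σ ^ 2 / 2) / σ - 1 / (2 * ((1 - X) / σ)) = 0 := by
  have h1X : 1 - X ≠ 0 := sub_ne_zero.mpr hX.symm
  rw [eq_neg_of_add_eq_zero_left hb]
  field_simp
  ring

/-- Let `σ̄ > 0` and let `u` on `(0,1) × (0,∞)` have partial derivatives `∂ₜu`, `∂ₛu`,
`∂ₛₛu` with `s²∂ₛₛu < 1`, satisfying `∂ₜu + (σ̄²/2)·s²∂ₛₛu/(1 − s²∂ₛₛu) = 0`.
Define `v(t,s) = (−u(t,s) − log s + σ̄²t/2)/σ̄`. Then `v` has partial derivatives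
`∂ₜv`, `∂ₛv`, `∂ₛₛv` with `s²∂ₛₛv = (1 − s²∂ₛₛu)/σ̄ > 0`, and `∂ₜv − 1/(2s²∂ₛₛv) = 0`. -/
theorem stmt11 (σb : ℝ) (hσb : 0 < σb)
    (u ut us uss : ℝ → ℝ → ℝ)
    (hut : ∀ t ∈ Set.Ioo (0:ℝ) 1, ∀ s ∈ Set.Ioi (0:ℝ),
      HasDerivAt (fun τ => u τ s) (ut t s) t)
    (hus : ∀ t ∈ Set.Ioo (0:ℝ) 1, ∀ s ∈ Set.Ioi (0:ℝ),
      HasDerivAt (fun σ' => u t σ') (us t s) s)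
    (huss : ∀ t ∈ Set.Ioo (0:ℝ) 1, ∀ s ∈ Set.Ioi (0:ℝ),
      HasDerivAt (fun σ' => us t σ') (uss t s) s)
    (hlt : ∀ t ∈ Set.Ioo (0:ℝ) 1, ∀ s ∈ Set.Ioi (0:ℝ), s ^ 2 * uss t s < 1)
    (hpde : ∀ t ∈ Set.Ioo (0:ℝ) 1, ∀ s ∈ Set.Ioi (0:ℝ),
      ut t s + σb ^ 2 / 2 * (s ^ 2 * uss t s) / (1 - s ^ 2 * uss t s) = 0)
    (v : ℝ → ℝ → ℝ)
    (hv : ∀ t s, v t s = (-u t s - Real.log s + σb ^ 2 * t / 2) / σb) :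
    ∃ vt vs vss : ℝ → ℝ → ℝ,
      ∀ t ∈ Set.Ioo (0:ℝ) 1, ∀ s ∈ Set.Ioi (0:ℝ),
        HasDerivAt (fun τ => v τ s) (vt t s) t ∧
        HasDerivAt (fun σ' => v t σ') (vs t s) s ∧
        HasDerivAt (fun σ' => vs t σ') (vss t s) s ∧
        s ^ 2 * vss t s = (1 - s ^ 2 * uss t s) / σb ∧
        0 < s ^ 2 * vss t s ∧
        vt t s - 1 / (2 * (s ^ 2 * vss t s)) = 0 := by
  refine ⟨fun t s => (-ut t s + σb ^ 2 / 2) / σb, fun t s => (-us t s - 1 / s) / σb,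
    fun t s => (-uss t s + 1 / s ^ 2) / σb, fun t ht s hs => ?_⟩
  have hs0 : s ≠ 0 := ne_of_gt hs
  have hv' : v = fun t s => (-u t s - Real.log s + σb ^ 2 * t / 2) / σb :=
    funext fun t => funext (hv t)
  have hscaled := sq_mul_neg_add_one_div_sq_div hs0 (uss t s) σb
  subst hv'
  refine ⟨(hut t ht s hs).neg_sub_const_add_mul_div _ _ _,
    (hus t ht s hs).neg_sub_log_add_const_div hs0 _ _,
    (huss t ht s hs).neg_sub_one_div_div hs0 _, hscaled, ?_, ?_⟩
  · rw [hscaled]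
    exact div_pos (sub_pos.mpr (hlt t ht s hs)) hσb
  · rw [hscaled]
    exact neg_add_half_sq_div_sub_one_div_eq_zero (hlt t ht s hs).ne (hpde t ht s hs)
end

section
/- Let v : (0,1) × (0,∞) → ℝ be twice continuously differentiable with ∂_{ss}v(t,s) > 0 for all (t,s), satisfying ∂_t v(t,s) = 1/(2 s² ∂_{ss}v(t,s)). Let J ⊆ ℝ be open and let g : (0,1) × J → ℝ be twice continuously differentiable such that for all (t,s) ∈ (0,1) × (0,∞): ∂_s v(t,s) ∈ J, g(t, ∂_s v(t,s)) = s·∂_s v(t,s) − v(t,s), and ∂_y g(t, ∂_s v(t,s)) = s (i.e. g(t,·) is the Legendre transform of v(t,·)). Then at every point of the form (t, y) with y = ∂_s v(t,s), the function g satisfies ∂_t g(t,y) + ∂_{yy}g(t,y) / (2 (∂_y g(t,y))²) = 0. -/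
/-
Differentiating `∂_y g(t, ∂ₛv(t,s)) = s` in `s` gives `∂_{yy}g · ∂ₛₛv = 1`. For the time
derivative: since `v(τ,·)` is convex, `g(τ,y) = q y − v(τ,q) ≥ s y − v(τ,s)` whenever
`∂ₛv(τ,q) = y`, and for `τ` near `t` such a `q` exists by the intermediate value theorem. So
`τ ↦ s y − v(τ,s)` touches `τ ↦ g(τ,y)` from below at `τ = t` when `y = ∂ₛv(t,s)`, whence
`∂ₜg = −∂ₜv = −1/(2s²∂ₛₛv)`.
-/

open Set Filter Topology

lemma mul_sub_le_of_hasDerivAt_of_monotoneOn {f f' : ℝ → ℝ} {S : Set ℝ} (hS : Convex ℝ S)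
    (hf : ∀ x ∈ S, HasDerivAt f (f' x) x) (hf' : MonotoneOn f' S) {p q : ℝ} (hp : p ∈ S)
    (hq : q ∈ S) :
    p * f' q - f p ≤ q * f' q - f q := by
  have hmvt : ∀ {a b}, a ∈ S → b ∈ S → a < b →
      ∃ c ∈ Ioo a b, c ∈ S ∧ f b - f a = f' c * (b - a) := by
    intro a b ha hb hab
    have hsub : Icc a b ⊆ S := hS.ordConnected.out ha hb
    obtain ⟨c, hc, hslope⟩ := exists_hasDerivAt_eq_slope f f' hab
      ((HasDerivAt.continuousOn hf).mono hsub)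
      (fun x hx => hf x (hsub (Ioo_subset_Icc_self hx)))
    refine ⟨c, hc, hsub (Ioo_subset_Icc_self hc), ?_⟩
    rw [hslope]
    field_simp [sub_ne_zero.2 hab.ne']
  rcases lt_trichotomy p q with hpq | rfl | hqp
  · obtain ⟨c, hc, hcS, hc_eq⟩ := hmvt hp hq hpq
    nlinarith [hf' hcS hq hc.2.le]
  · exact le_rfl
  · obtain ⟨c, hc, hcS, hc_eq⟩ := hmvt hq hp hqp
    nlinarith [hf' hq hcS hc.1.le]

lemma strictMonoOn_of_hasDerivAt_pos {f f' : ℝ → ℝ} {S : Set ℝ} (hS : Convex ℝ S)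
    (hf : ∀ x ∈ S, HasDerivAt f (f' x) x) (hf' : ∀ x ∈ S, 0 < f' x) : StrictMonoOn f S :=
  strictMonoOn_of_hasDerivWithinAt_pos hS (HasDerivAt.continuousOn hf)
    (fun x hx => (hf x (interior_subset hx)).hasDerivWithinAt)
    (fun x hx => hf' x (interior_subset hx))

lemma eventually_exists_eq_of_strictMonoOn {F : ℝ → ℝ → ℝ} {S : Set ℝ} {t s : ℝ}
    (hS : S ∈ 𝓝 s) (hmono : StrictMonoOn (F t) S)
    (hcont_t : ∀ a ∈ S, ContinuousAt (fun τ => F τ a) t)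
    (hcont : ∀ᶠ τ in 𝓝 t, ContinuousOn (F τ) S) :
    ∀ᶠ τ in 𝓝 t, ∃ q ∈ S, F τ q = F t s := by
  obtain ⟨ε, hε, hball⟩ := Metric.mem_nhds_iff.1 hS
  have hsub : Icc (s - ε / 2) (s + ε / 2) ⊆ S := fun x hx => hball <| by
    rw [Real.ball_eq_Ioo]
    exact ⟨by linarith [hx.1], by linarith [hx.2]⟩
  have ha : s - ε / 2 ∈ S := hsub ⟨le_rfl, by linarith⟩
  have hb : s + ε / 2 ∈ S := hsub ⟨by linarith, le_rfl⟩
  have hsS : s ∈ S := mem_of_mem_nhds hS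
  filter_upwards [(hcont_t _ ha).eventually_lt_const (hmono ha hsS (by linarith)),
    (hcont_t _ hb).eventually_const_lt (hmono hsS hb (by linarith)), hcont] with τ hτa hτb hτ
  obtain ⟨q, hq, hqy⟩ :=
    intermediate_value_Icc (by linarith) (hτ.mono hsub) ⟨hτa.le, hτb.le⟩
  exact ⟨q, hsub hq, hqy⟩

lemma HasDerivAt.eq_of_eventuallyLE_of_eq {u w : ℝ → ℝ} {u' w' t : ℝ}
    (hu : HasDerivAt u u' t) (hw : HasDerivAt w w' t) (hle : u ≤ᶠ[𝓝 t] w) (heq : u t = w t) :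
    u' = w' := by
  have hmin : IsLocalMin (w - u) t := by
    filter_upwards [hle] with τ hτ
    simp only [Pi.sub_apply, heq, sub_self, sub_nonneg]
    exact hτ
  linarith [hmin.hasDerivAt_eq_zero (hw.sub hu)]

lemma HasDerivAt.mul_eq_one_of_eventually_leftInverse {f h : ℝ → ℝ} {f' h' x : ℝ}
    (hh : HasDerivAt h h' (f x)) (hf : HasDerivAt f f' x) (hinv : ∀ᶠ y in 𝓝 x, h (f y) = y) :
    h' * f' = 1 :=
  (hh.comp x hf).unique ((hasDerivAt_id x).congr_of_eventuallyEq hinv)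

theorem stmt12_general (v vt vs vss : ℝ → ℝ → ℝ)
    (hvt : ∀ t ∈ Set.Ioo (0:ℝ) 1, ∀ s ∈ Set.Ioi (0:ℝ),
      HasDerivAt (fun τ => v τ s) (vt t s) t)
    (hvs : ∀ t ∈ Set.Ioo (0:ℝ) 1, ∀ s ∈ Set.Ioi (0:ℝ),
      HasDerivAt (fun s' => v t s') (vs t s) s)
    (hvss : ∀ t ∈ Set.Ioo (0:ℝ) 1, ∀ s ∈ Set.Ioi (0:ℝ),
      HasDerivAt (fun s' => vs t s') (vss t s) s)
    (hvsc : ContinuousOn (fun p : ℝ × ℝ => vs p.1 p.2) (Set.Ioo (0:ℝ) 1 ×ˢ Set.Ioi (0:ℝ)))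
    (hvsspos : ∀ t ∈ Set.Ioo (0:ℝ) 1, ∀ s ∈ Set.Ioi (0:ℝ), 0 < vss t s)
    (hvpde : ∀ t ∈ Set.Ioo (0:ℝ) 1, ∀ s ∈ Set.Ioi (0:ℝ),
      vt t s = 1 / (2 * (s ^ 2 * vss t s)))
    (J : Set ℝ)
    (g gt gy gyy : ℝ → ℝ → ℝ)
    (hgt : ∀ t ∈ Set.Ioo (0:ℝ) 1, ∀ y ∈ J, HasDerivAt (fun τ => g τ y) (gt t y) t)
    (hgyy : ∀ t ∈ Set.Ioo (0:ℝ) 1, ∀ y ∈ J, HasDerivAt (fun y' => gy t y') (gyy t y) y)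
    (hrange : ∀ t ∈ Set.Ioo (0:ℝ) 1, ∀ s ∈ Set.Ioi (0:ℝ), vs t s ∈ J)
    (hleg : ∀ t ∈ Set.Ioo (0:ℝ) 1, ∀ s ∈ Set.Ioi (0:ℝ),
      g t (vs t s) = s * vs t s - v t s)
    (hleg' : ∀ t ∈ Set.Ioo (0:ℝ) 1, ∀ s ∈ Set.Ioi (0:ℝ), gy t (vs t s) = s) :
    ∀ t ∈ Set.Ioo (0:ℝ) 1, ∀ s ∈ Set.Ioi (0:ℝ),
      gt t (vs t s) + gyy t (vs t s) / (2 * (gy t (vs t s)) ^ 2) = 0 := by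
  intro t ht s hs
  have hvs_contOn : ∀ τ ∈ Ioo (0:ℝ) 1, ContinuousOn (vs τ) (Ioi 0) := fun τ hτ =>
    HasDerivAt.continuousOn (hvss τ hτ)
  have hvs_mono : ∀ τ ∈ Ioo (0:ℝ) 1, StrictMonoOn (vs τ) (Ioi 0) := fun τ hτ =>
    strictMonoOn_of_hasDerivAt_pos (convex_Ioi 0) (hvss τ hτ) (hvsspos τ hτ)
  have hvs_cont : ∀ a ∈ Ioi (0:ℝ), ContinuousAt (fun τ => vs τ a) t := fun a ha =>
    (hvsc.continuousAt (prod_mem_nhds (Ioo_mem_nhds ht.1 ht.2) (Ioi_mem_nhds ha))).comp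
      (f := fun τ => (τ, a)) (Continuous.prodMk_left a).continuousAt
  have hinv : gyy t (vs t s) * vss t s = 1 :=
    (hgyy t ht _ (hrange t ht s hs)).mul_eq_one_of_eventually_leftInverse (hvss t ht s hs)
      (eventually_of_mem (Ioi_mem_nhds hs) (hleg' t ht))
  have hsupport : (fun τ => s * vs t s - v τ s) ≤ᶠ[𝓝 t] fun τ => g τ (vs t s) := by
    filter_upwards [eventually_exists_eq_of_strictMonoOn (Ioi_mem_nhds hs) (hvs_mono t ht)
      hvs_cont (eventually_of_mem (Ioo_mem_nhds ht.1 ht.2) hvs_contOn), Ioo_mem_nhds ht.1 ht.2]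
      with τ ⟨q, hq, hqy⟩ hτ
    rw [← hqy, hleg τ hτ q hq]
    exact mul_sub_le_of_hasDerivAt_of_monotoneOn (convex_Ioi 0) (hvs τ hτ)
      (hvs_mono τ hτ).monotoneOn hs hq
  have htime : -vt t s = gt t (vs t s) :=
    ((hvt t ht s hs).const_sub _).eq_of_eventuallyLE_of_eq (hgt t ht _ (hrange t ht s hs))
      hsupport (by rw [hleg t ht s hs])
  rw [hleg' t ht s hs, ← htime, hvpde t ht s hs]
  have hs_ne : s ≠ 0 := ne_of_gt hs
  field_simp [(hvsspos t ht s hs).ne']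
  linear_combination hinv

/-- Let `v` on `(0,1) × (0,∞)` be twice continuously differentiable with `∂ₛₛv > 0` and
`∂ₜv = 1/(2s²∂ₛₛv)`, and let `g` on `(0,1) × J` (with `J` open) be twice continuously
differentiable with `g(t,·)` the Legendre transform of `v(t,·)`, i.e.
`g(t, ∂ₛv(t,s)) = s·∂ₛv(t,s) − v(t,s)` and `∂_y g(t, ∂ₛv(t,s)) = s`. Then at every point
`(t,y)` with `y = ∂ₛv(t,s)`, `g` satisfies `∂ₜg + ∂_{yy}g/(2(∂_y g)²) = 0`. -/
theorem stmt12 (v vt vs vss : ℝ → ℝ → ℝ)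
    (hvt : ∀ t ∈ Set.Ioo (0:ℝ) 1, ∀ s ∈ Set.Ioi (0:ℝ),
      HasDerivAt (fun τ => v τ s) (vt t s) t)
    (hvs : ∀ t ∈ Set.Ioo (0:ℝ) 1, ∀ s ∈ Set.Ioi (0:ℝ),
      HasDerivAt (fun s' => v t s') (vs t s) s)
    (hvss : ∀ t ∈ Set.Ioo (0:ℝ) 1, ∀ s ∈ Set.Ioi (0:ℝ),
      HasDerivAt (fun s' => vs t s') (vss t s) s)
    (hvtc : ContinuousOn (fun p : ℝ × ℝ => vt p.1 p.2) (Set.Ioo (0:ℝ) 1 ×ˢ Set.Ioi (0:ℝ)))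
    (hvsc : ContinuousOn (fun p : ℝ × ℝ => vs p.1 p.2) (Set.Ioo (0:ℝ) 1 ×ˢ Set.Ioi (0:ℝ)))
    (hvssc : ContinuousOn (fun p : ℝ × ℝ => vss p.1 p.2) (Set.Ioo (0:ℝ) 1 ×ˢ Set.Ioi (0:ℝ)))
    (hvsspos : ∀ t ∈ Set.Ioo (0:ℝ) 1, ∀ s ∈ Set.Ioi (0:ℝ), 0 < vss t s)
    (hvpde : ∀ t ∈ Set.Ioo (0:ℝ) 1, ∀ s ∈ Set.Ioi (0:ℝ),
      vt t s = 1 / (2 * (s ^ 2 * vss t s)))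
    (J : Set ℝ) (hJ : IsOpen J)
    (g gt gy gyy : ℝ → ℝ → ℝ)
    (hgt : ∀ t ∈ Set.Ioo (0:ℝ) 1, ∀ y ∈ J, HasDerivAt (fun τ => g τ y) (gt t y) t)
    (hgy : ∀ t ∈ Set.Ioo (0:ℝ) 1, ∀ y ∈ J, HasDerivAt (fun y' => g t y') (gy t y) y)
    (hgyy : ∀ t ∈ Set.Ioo (0:ℝ) 1, ∀ y ∈ J, HasDerivAt (fun y' => gy t y') (gyy t y) y)
    (hgtc : ContinuousOn (fun p : ℝ × ℝ => gt p.1 p.2) (Set.Ioo (0:ℝ) 1 ×ˢ J))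
    (hgyc : ContinuousOn (fun p : ℝ × ℝ => gy p.1 p.2) (Set.Ioo (0:ℝ) 1 ×ˢ J))
    (hgyyc : ContinuousOn (fun p : ℝ × ℝ => gyy p.1 p.2) (Set.Ioo (0:ℝ) 1 ×ˢ J))
    (hrange : ∀ t ∈ Set.Ioo (0:ℝ) 1, ∀ s ∈ Set.Ioi (0:ℝ), vs t s ∈ J)
    (hleg : ∀ t ∈ Set.Ioo (0:ℝ) 1, ∀ s ∈ Set.Ioi (0:ℝ),
      g t (vs t s) = s * vs t s - v t s)
    (hleg' : ∀ t ∈ Set.Ioo (0:ℝ) 1, ∀ s ∈ Set.Ioi (0:ℝ), gy t (vs t s) = s) :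
    ∀ t ∈ Set.Ioo (0:ℝ) 1, ∀ s ∈ Set.Ioi (0:ℝ),
      gt t (vs t s) + gyy t (vs t s) / (2 * (gy t (vs t s)) ^ 2) = 0 :=
  stmt12_general v vt vs vss hvt hvs hvss hvsc hvsspos hvpde J g gt gy gyy hgt hgyy hrange hleg
    hleg'
end

section
/- Let J ⊆ ℝ be an open interval and let g : (0,1) × J → ℝ be twice continuously differentiable with ∂_y g(t,y) > 0 for all (t,y) ∈ (0,1) × J, satisfying ∂_t g(t,y) + ∂_{yy}g(t,y) / (2 (∂_y g(t,y))²) = 0. Let w : (0,1) × ℝ → ℝ be twice continuously differentiable such that w(t, g(t,y)) = y for all (t,y) ∈ (0,1) × J (i.e. w(t,·) is a left inverse of g(t,·)). Then for every (t,y) ∈ (0,1) × J, at the point x = g(t,y) the function w satisfies the backward heat equation ∂_t w(t,x) + (1/2) ∂_{xx}w(t,x) = 0. -/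
/-!
Differentiating `w t (g t y) = y` in `y` gives `∂ₓw = 1 / ∂_y g` and, once more,
`∂ₓₓw = -∂_{yy}g / (∂_y g)³` at `x = g t y`. Differentiating it in `t`, which is legitimate
because `w` has continuous partial derivatives, gives `∂ₜw = -∂ₜg / ∂_y g`. The equation for `g`
turns this into `∂_{yy}g / (2 (∂_y g)³)`, which cancels `(1/2) ∂ₓₓw`.
-/

open Set Filter Topology Function

theorem hasDerivAt_comp_of_continuousAt_partialDerivs {F : Type*} [NormedAddCommGroup F]
    [NormedSpace ℝ F] {f ft fx : ℝ → ℝ → F} {γ : ℝ → ℝ} {γ' t : ℝ}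
    (hft : ∀ᶠ p in 𝓝 (t, γ t), HasDerivAt (f · p.2) (ft p.1 p.2) p.1)
    (hfx : ∀ᶠ p in 𝓝 (t, γ t), HasDerivAt (f p.1 ·) (fx p.1 p.2) p.2)
    (hftc : ContinuousAt ↿ft (t, γ t)) (hfxc : ContinuousAt ↿fx (t, γ t))
    (hγ : HasDerivAt γ γ' t) :
    HasDerivAt (fun τ => f τ (γ τ)) (ft t (γ t) + γ' • fx t (γ t)) t := by
  have hsmulRight : Continuous fun v : F => (1 : ℝ →L[ℝ] ℝ).smulRight v :=
    (ContinuousLinearMap.smulRightL ℝ ℝ F 1).continuous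
  have hf := hasStrictFDerivAt_uncurry_coprod (f := f)
    (f₁ := fun a b => (1 : ℝ →L[ℝ] ℝ).smulRight (ft a b))
    (f₂ := fun a b => (1 : ℝ →L[ℝ] ℝ).smulRight (fx a b))
    (hft.mono fun p hp => hp.hasFDerivAt) (hfx.mono fun p hp => hp.hasFDerivAt)
    (hsmulRight.continuousAt.comp hftc) (hsmulRight.continuousAt.comp hfxc)
  simpa [HasUncurry.uncurry, comp_def] using
    hf.hasFDerivAt.comp_hasDerivAt t ((hasDerivAt_id t).prodMk hγ)

theorem HasDerivAt.mul_eq_one_of_leftInverse {f g : ℝ → ℝ} {f' g' y : ℝ}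
    (hf : HasDerivAt f f' (g y)) (hg : HasDerivAt g g' y) (hinv : ∀ᶠ z in 𝓝 y, f (g z) = z) :
    f' * g' = 1 :=
  (hf.comp y hg).unique ((hasDerivAt_id y).congr_of_eventuallyEq hinv)

theorem HasDerivAt.eq_neg_div_pow_three_of_leftInverse {f f' g g' : ℝ → ℝ} {f'' g'' y : ℝ}
    (hf : ∀ z, HasDerivAt f (f' z) z) (hg : ∀ᶠ z in 𝓝 y, HasDerivAt g (g' z) z)
    (hf' : HasDerivAt f' f'' (g y)) (hg' : HasDerivAt g' g'' y)
    (hinv : ∀ᶠ z in 𝓝 y, f (g z) = z) (hg'y : g' y ≠ 0) :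
    f'' = -g'' / g' y ^ 3 := by
  have hf'_comp : ∀ᶠ z in 𝓝 y, f' (g z) = (g' z)⁻¹ := by
    filter_upwards [hg, hinv.eventually_nhds] with z hgz hinvz
    exact eq_inv_of_mul_eq_one_left ((hf (g z)).mul_eq_one_of_leftInverse hgz hinvz)
  have h : f'' * g' y = -g'' / g' y ^ 2 :=
    (hf'.comp y hg.self_of_nhds).unique ((hg'.inv hg'y).congr_of_eventuallyEq hf'_comp)
  field_simp at h ⊢
  linear_combination h

theorem stmt13_general (J : Set ℝ) (hJopen : IsOpen J)
    (g gt gy gyy : ℝ → ℝ → ℝ)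
    (hgt : ∀ t ∈ Set.Ioo (0:ℝ) 1, ∀ y ∈ J, HasDerivAt (fun τ => g τ y) (gt t y) t)
    (hgy : ∀ t ∈ Set.Ioo (0:ℝ) 1, ∀ y ∈ J, HasDerivAt (fun y' => g t y') (gy t y) y)
    (hgyy : ∀ t ∈ Set.Ioo (0:ℝ) 1, ∀ y ∈ J, HasDerivAt (fun y' => gy t y') (gyy t y) y)
    (hgypos : ∀ t ∈ Set.Ioo (0:ℝ) 1, ∀ y ∈ J, 0 < gy t y)
    (hgpde : ∀ t ∈ Set.Ioo (0:ℝ) 1, ∀ y ∈ J,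
      gt t y + gyy t y / (2 * (gy t y) ^ 2) = 0)
    (w wt wx wxx : ℝ → ℝ → ℝ)
    (hwt : ∀ t ∈ Set.Ioo (0:ℝ) 1, ∀ x : ℝ, HasDerivAt (fun τ => w τ x) (wt t x) t)
    (hwx : ∀ t ∈ Set.Ioo (0:ℝ) 1, ∀ x : ℝ, HasDerivAt (fun x' => w t x') (wx t x) x)
    (hwxx : ∀ t ∈ Set.Ioo (0:ℝ) 1, ∀ x : ℝ, HasDerivAt (fun x' => wx t x') (wxx t x) x)
    (hwtc : ContinuousOn (fun p : ℝ × ℝ => wt p.1 p.2) (Set.Ioo (0:ℝ) 1 ×ˢ Set.univ))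
    (hwxc : ContinuousOn (fun p : ℝ × ℝ => wx p.1 p.2) (Set.Ioo (0:ℝ) 1 ×ˢ Set.univ))
    (hinv : ∀ t ∈ Set.Ioo (0:ℝ) 1, ∀ y ∈ J, w t (g t y) = y) :
    ∀ t ∈ Set.Ioo (0:ℝ) 1, ∀ y ∈ J,
      wt t (g t y) + (1 / 2) * wxx t (g t y) = 0 := by
  intro t ht y hy
  have hJ : J ∈ 𝓝 y := hJopen.mem_nhds hy
  have hU : Ioo 0 1 ×ˢ univ ∈ 𝓝 (t, g t y) := prod_mem_nhds (Ioo_mem_nhds ht.1 ht.2) univ_mem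
  have hgy0 : gy t y ≠ 0 := (hgypos t ht y hy).ne'
  have hwx_eq : wx t (g t y) * gy t y = 1 :=
    (hwx t ht _).mul_eq_one_of_leftInverse (hgy t ht y hy) (eventually_of_mem hJ (hinv t ht))
  have hwxx_eq : wxx t (g t y) = -gyy t y / gy t y ^ 3 :=
    HasDerivAt.eq_neg_div_pow_three_of_leftInverse (hwx t ht) (eventually_of_mem hJ (hgy t ht))
      (hwxx t ht _) (hgyy t ht y hy) (eventually_of_mem hJ (hinv t ht)) hgy0
  have hwt_eq : wt t (g t y) + gt t y * wx t (g t y) = 0 := by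
    refine (hasDerivAt_comp_of_continuousAt_partialDerivs (f := w) (γ := (g · y))
      (eventually_of_mem hU fun p hp => hwt p.1 hp.1 p.2)
      (eventually_of_mem hU fun p hp => hwx p.1 hp.1 p.2)
      (hwtc.continuousAt hU) (hwxc.continuousAt hU) (hgt t ht y hy)).unique ?_
    refine (hasDerivAt_const t y).congr_of_eventuallyEq ?_
    exact eventually_of_mem (Ioo_mem_nhds ht.1 ht.2) fun τ hτ => hinv τ hτ y hy
  have hpde := hgpde t ht y hy
  rw [hwxx_eq]
  field_simp at hpde ⊢
  linear_combination (2 * gy t y ^ 3) * hwt_eq - (2 * gy t y ^ 2 * gt t y) * hwx_eq - hpde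

/-- Let `J` be an open interval and `g` on `(0,1) × J` twice continuously differentiable
with `∂_y g > 0`, satisfying `∂ₜg + ∂_{yy}g/(2(∂_y g)²) = 0`. Let `w` on `(0,1) × ℝ` be
twice continuously differentiable with `w(t, g(t,y)) = y` for all `(t,y)`. Then at every
point `x = g(t,y)`, `w` satisfies the backward heat equation `∂ₜw + (1/2)∂_{xx}w = 0`. -/
theorem stmt13 (J : Set ℝ) (hJopen : IsOpen J) (hJconv : Convex ℝ J)
    (g gt gy gyy : ℝ → ℝ → ℝ)
    (hgt : ∀ t ∈ Set.Ioo (0:ℝ) 1, ∀ y ∈ J, HasDerivAt (fun τ => g τ y) (gt t y) t)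
    (hgy : ∀ t ∈ Set.Ioo (0:ℝ) 1, ∀ y ∈ J, HasDerivAt (fun y' => g t y') (gy t y) y)
    (hgyy : ∀ t ∈ Set.Ioo (0:ℝ) 1, ∀ y ∈ J, HasDerivAt (fun y' => gy t y') (gyy t y) y)
    (hgtc : ContinuousOn (fun p : ℝ × ℝ => gt p.1 p.2) (Set.Ioo (0:ℝ) 1 ×ˢ J))
    (hgyc : ContinuousOn (fun p : ℝ × ℝ => gy p.1 p.2) (Set.Ioo (0:ℝ) 1 ×ˢ J))
    (hgyyc : ContinuousOn (fun p : ℝ × ℝ => gyy p.1 p.2) (Set.Ioo (0:ℝ) 1 ×ˢ J))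
    (hgypos : ∀ t ∈ Set.Ioo (0:ℝ) 1, ∀ y ∈ J, 0 < gy t y)
    (hgpde : ∀ t ∈ Set.Ioo (0:ℝ) 1, ∀ y ∈ J,
      gt t y + gyy t y / (2 * (gy t y) ^ 2) = 0)
    (w wt wx wxx : ℝ → ℝ → ℝ)
    (hwt : ∀ t ∈ Set.Ioo (0:ℝ) 1, ∀ x : ℝ, HasDerivAt (fun τ => w τ x) (wt t x) t)
    (hwx : ∀ t ∈ Set.Ioo (0:ℝ) 1, ∀ x : ℝ, HasDerivAt (fun x' => w t x') (wx t x) x)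
    (hwxx : ∀ t ∈ Set.Ioo (0:ℝ) 1, ∀ x : ℝ, HasDerivAt (fun x' => wx t x') (wxx t x) x)
    (hwtc : ContinuousOn (fun p : ℝ × ℝ => wt p.1 p.2) (Set.Ioo (0:ℝ) 1 ×ˢ Set.univ))
    (hwxc : ContinuousOn (fun p : ℝ × ℝ => wx p.1 p.2) (Set.Ioo (0:ℝ) 1 ×ˢ Set.univ))
    (hwxxc : ContinuousOn (fun p : ℝ × ℝ => wxx p.1 p.2) (Set.Ioo (0:ℝ) 1 ×ˢ Set.univ))
    (hinv : ∀ t ∈ Set.Ioo (0:ℝ) 1, ∀ y ∈ J, w t (g t y) = y) :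
    ∀ t ∈ Set.Ioo (0:ℝ) 1, ∀ y ∈ J,
      wt t (g t y) + (1 / 2) * wxx t (g t y) = 0 :=
  stmt13_general J hJopen g gt gy gyy hgt hgy hgyy hgypos hgpde w wt wx wxx hwt hwx hwxx hwtc hwxc
    hinv
end

section
/- Let a ∈ ℝ and m > 0. Let H : (0,1) × ℝ → ℝ be twice continuously differentiable with H(t,x) > 0 and ∂_x H(t,x) > 0 for all (t,x), satisfying the backward heat equation ∂_t H(t,x) + (1/2)∂_{xx}H(t,x) = 0. Suppose that the function F(t,x) := m / H(t, −x + a·t) also satisfies ∂_t F(t,x) + (1/2)∂_{xx}F(t,x) = 0 on (0,1) × ℝ. Then a > 0 and there exists a constant c > 0 such that H(t,x) = c·exp(a x − a² t/2) for all (t,x) ∈ (0,1) × ℝ. -/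
/-!
For `G = 1 / H` the backward heat equation of `H` gives `(∂ₜ + ½ ∂ₓₓ) G = (∂ₓH)² / H³`, and the
substitution `x ↦ a t - x` in `F = m G(t, a t - x)` adds the transport term `a ∂ₓG = -a ∂ₓH / H²`.
So the heat equation for `F` reads `m ∂ₓH (∂ₓH - a H) / H³ = 0`, i.e. `∂ₓH = a H` as `∂ₓH > 0`.
Then `a > 0`, each `H(t, ·)` is a multiple of `exp (a x)`, `∂ₓₓH = a² H`, and the heat equation
leaves `∂ₜH = -(a² / 2) H`, which integrates to the claimed formula.
-/

open Set Filter Topology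

theorem hasFDerivAt_uncurry_of_continuousAt_partials {f ft fx : ℝ → ℝ → ℝ} {p : ℝ × ℝ}
    (hft : ∀ᶠ q in 𝓝 p, HasDerivAt (f · q.2) (ft q.1 q.2) q.1)
    (hfx : ∀ᶠ q in 𝓝 p, HasDerivAt (f q.1 ·) (fx q.1 q.2) q.2)
    (hftc : ContinuousAt (fun q : ℝ × ℝ => ft q.1 q.2) p)
    (hfxc : ContinuousAt (fun q : ℝ × ℝ => fx q.1 q.2) p) :
    HasFDerivAt (fun q : ℝ × ℝ => f q.1 q.2)
      (ft p.1 p.2 • ContinuousLinearMap.fst ℝ ℝ ℝ + fx p.1 p.2 • ContinuousLinearMap.snd ℝ ℝ ℝ)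
      p := by
  have hsmul : Continuous fun r : ℝ => (1 : ℝ →L[ℝ] ℝ).smulRight r :=
    (ContinuousLinearMap.smulRightL ℝ ℝ ℝ 1).continuous
  have := (hasStrictFDerivAt_uncurry_coprod (𝕜 := ℝ)
    (f₁ := fun t y => (1 : ℝ →L[ℝ] ℝ).smulRight (ft t y))
    (f₂ := fun t y => (1 : ℝ →L[ℝ] ℝ).smulRight (fx t y))
    (hft.mono fun q hq => hq.hasFDerivAt) (hfx.mono fun q hq => hq.hasFDerivAt)
    (hsmul.continuousAt.comp hftc) (hsmul.continuousAt.comp hfxc)).hasFDerivAt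
  refine this.congr_fderiv ?_
  ext <;> simp [Function.HasUncurry.uncurry]

theorem hasDerivAt_comp_line_of_continuousOn_partials {f ft fx : ℝ → ℝ → ℝ} {s : Set ℝ}
    (hs : IsOpen s) (hft : ∀ t ∈ s, ∀ y, HasDerivAt (fun τ => f τ y) (ft t y) t)
    (hfx : ∀ t ∈ s, ∀ y, HasDerivAt (fun y' => f t y') (fx t y) y)
    (hftc : ContinuousOn (fun p : ℝ × ℝ => ft p.1 p.2) (s ×ˢ univ))
    (hfxc : ContinuousOn (fun p : ℝ × ℝ => fx p.1 p.2) (s ×ˢ univ)) {t : ℝ} (ht : t ∈ s)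
    (a x : ℝ) :
    HasDerivAt (fun τ => f τ (a * τ - x)) (ft t (a * t - x) + a * fx t (a * t - x)) t := by
  have hU : s ×ˢ univ ∈ 𝓝 (t, a * t - x) := (hs.prod isOpen_univ).mem_nhds ⟨ht, trivial⟩
  have hf := hasFDerivAt_uncurry_of_continuousAt_partials
    (mem_of_superset hU fun q hq => hft q.1 hq.1 q.2)
    (mem_of_superset hU fun q hq => hfx q.1 hq.1 q.2)
    (hftc.continuousAt hU) (hfxc.continuousAt hU)
  have hline : HasDerivAt (fun τ => (τ, a * τ - x)) ((1 : ℝ), a) t :=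
    (hasDerivAt_id t).prodMk
      (((hasDerivAt_id t).const_mul a).sub_const x |>.congr_deriv (mul_one a))
  refine (hf.comp_hasDerivAt t hline).congr_deriv ?_
  simp [mul_comm]

theorem hasDerivAt_div_comp_const_sub {h : ℝ → ℝ} {h' c m x : ℝ}
    (hh : HasDerivAt h h' (c - x)) (h0 : h (c - x) ≠ 0) :
    HasDerivAt (fun x => m / h (c - x)) (m * h' / h (c - x) ^ 2) x := by
  refine ((hasDerivAt_const x m).fun_div (hh.comp_const_sub c x) h0).congr_deriv ?_
  ring

theorem hasDerivAt_mul_div_sq_comp_const_sub {h g : ℝ → ℝ} {g' c m x : ℝ}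
    (hh : HasDerivAt h (g (c - x)) (c - x)) (hg : HasDerivAt g g' (c - x))
    (h0 : h (c - x) ≠ 0) :
    HasDerivAt (fun x => m * g (c - x) / h (c - x) ^ 2)
      (m * (2 * g (c - x) ^ 2 - h (c - x) * g') / h (c - x) ^ 3) x := by
  refine (((hg.comp_const_sub c x).const_mul m).fun_div ((hh.comp_const_sub c x).fun_pow 2)
    (pow_ne_zero 2 h0)).congr_deriv ?_
  field_simp
  ring

/-- `hF` is `(∂ₜ + ½ ∂ₓₓ) (m / H (t, a t - x)) = 0`, written in the values `A, B, C, T` of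
`H, ∂ₓH, ∂ₓₓH, ∂ₜH` at `(t, a t - x)`. -/
theorem eq_mul_of_heat_reflected_reciprocal {m a A B C T : ℝ} (hm : 0 < m) (hA : 0 < A)
    (hB : 0 < B) (hT : T + 1 / 2 * C = 0)
    (hF : -(m * (T + a * B)) / A ^ 2 + 1 / 2 * (m * (2 * B ^ 2 - A * C) / A ^ 3) = 0) :
    B = a * A := by
  have hdefect : m * B * (B - a * A) / A ^ 3 = 0 := by
    rw [← hF, show T = -(1 / 2 * C) by linarith]
    field_simp
    ring
  have hmB : m * B / A ^ 3 ≠ 0 := by positivity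
  rw [mul_div_right_comm] at hdefect
  linarith [(mul_eq_zero.mp hdefect).resolve_left hmB]

theorem exists_eq_mul_exp_of_hasDerivAt_eq_mul {s : Set ℝ} (hs : IsOpen s)
    (hs' : IsPreconnected s) {f : ℝ → ℝ} {k : ℝ} (hf : ∀ x ∈ s, HasDerivAt f (k * f x) x) :
    ∃ c, ∀ x ∈ s, f x = c * Real.exp (k * x) := by
  have hg : ∀ x ∈ s, HasDerivAt (fun x => f x * Real.exp (-(k * x))) 0 x := fun x hx =>
    ((hf x hx).mul ((hasDerivAt_id x).const_mul k).neg.exp).congr_deriv (by ring)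
  obtain ⟨c, hc⟩ := hs.exists_is_const_of_deriv_eq_zero hs'
    (fun x hx => (hg x hx).differentiableAt.differentiableWithinAt)
    (fun x hx => (hg x hx).deriv)
  refine ⟨c, fun x hx => ?_⟩
  rw [← hc x hx, mul_assoc, ← Real.exp_add, neg_add_cancel, Real.exp_zero, mul_one]

theorem exists_eq_mul_exp_of_heat_of_partialX_eq_mul {s : Set ℝ} (hs : IsOpen s)
    (hs' : IsPreconnected s) {H Ht Hx Hxx : ℝ → ℝ → ℝ} {a : ℝ}
    (hHt : ∀ t ∈ s, ∀ x, HasDerivAt (fun τ => H τ x) (Ht t x) t)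
    (hHx : ∀ t ∈ s, ∀ x, HasDerivAt (fun x' => H t x') (Hx t x) x)
    (hHxx : ∀ t ∈ s, ∀ x, HasDerivAt (fun x' => Hx t x') (Hxx t x) x)
    (hHheat : ∀ t ∈ s, ∀ x, Ht t x + 1 / 2 * Hxx t x = 0)
    (hHx_eq : ∀ t ∈ s, ∀ x, Hx t x = a * H t x) :
    ∃ c, ∀ t ∈ s, ∀ x, H t x = c * Real.exp (a * x - a ^ 2 * t / 2) := by
  have hspace : ∀ t ∈ s, ∀ x, H t x = H t 0 * Real.exp (a * x) := fun t ht x => by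
    obtain ⟨c, hc⟩ := exists_eq_mul_exp_of_hasDerivAt_eq_mul isOpen_univ isPreconnected_univ
      fun x _ => hHx_eq t ht x ▸ hHx t ht x
    rw [hc x trivial, hc 0 trivial, mul_zero, Real.exp_zero, mul_one]
  have hHxx_eq : ∀ t ∈ s, ∀ x, Hxx t x = a ^ 2 * H t x := fun t ht x => by
    have h := ((hHx t ht x).const_mul a).congr_of_eventuallyEq
      (Eventually.of_forall (hHx_eq t ht))
    rw [(hHxx t ht x).unique h, hHx_eq t ht x]
    ring
  have htime : ∀ t ∈ s, HasDerivAt (fun τ => H τ 0) (-(a ^ 2 / 2) * H t 0) t := fun t ht =>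
    (hHt t ht 0).congr_deriv (by linarith [hHheat t ht 0, hHxx_eq t ht 0])
  obtain ⟨c, hc⟩ := exists_eq_mul_exp_of_hasDerivAt_eq_mul hs hs' htime
  refine ⟨c, fun t ht x => ?_⟩
  rw [hspace t ht x, hc t ht, mul_assoc, ← Real.exp_add]
  ring_nf

theorem partialX_eq_mul_of_heat_reflected_reciprocal {a m : ℝ} (hm : 0 < m) {s : Set ℝ}
    (hs : IsOpen s) {H Ht Hx Hxx F Ft Fx Fxx : ℝ → ℝ → ℝ}
    (hHpos : ∀ t ∈ s, ∀ x, 0 < H t x) (hHxpos : ∀ t ∈ s, ∀ x, 0 < Hx t x)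
    (hHt : ∀ t ∈ s, ∀ x, HasDerivAt (fun τ => H τ x) (Ht t x) t)
    (hHx : ∀ t ∈ s, ∀ x, HasDerivAt (fun x' => H t x') (Hx t x) x)
    (hHxx : ∀ t ∈ s, ∀ x, HasDerivAt (fun x' => Hx t x') (Hxx t x) x)
    (hHtc : ContinuousOn (fun p : ℝ × ℝ => Ht p.1 p.2) (s ×ˢ univ))
    (hHxc : ContinuousOn (fun p : ℝ × ℝ => Hx p.1 p.2) (s ×ˢ univ))
    (hHheat : ∀ t ∈ s, ∀ x, Ht t x + 1 / 2 * Hxx t x = 0)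
    (hF : ∀ t x, F t x = m / H t (a * t - x))
    (hFt : ∀ t ∈ s, ∀ x, HasDerivAt (fun τ => F τ x) (Ft t x) t)
    (hFx : ∀ t ∈ s, ∀ x, HasDerivAt (fun x' => F t x') (Fx t x) x)
    (hFxx : ∀ t ∈ s, ∀ x, HasDerivAt (fun x' => Fx t x') (Fxx t x) x)
    (hFheat : ∀ t ∈ s, ∀ x, Ft t x + 1 / 2 * Fxx t x = 0) :
    ∀ t ∈ s, ∀ y, Hx t y = a * H t y := by
  intro t ht y
  obtain ⟨x, rfl⟩ : ∃ x, y = a * t - x := ⟨a * t - y, by ring⟩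
  have hFx_eq : ∀ x', Fx t x' = m * Hx t (a * t - x') / H t (a * t - x') ^ 2 := fun x' =>
    (hFx t ht x').unique <| by
      simp_rw [hF]
      exact hasDerivAt_div_comp_const_sub (hHx t ht _) (hHpos t ht _).ne'
  have hFxx_eq : Fxx t x = m * (2 * Hx t (a * t - x) ^ 2 - H t (a * t - x) * Hxx t (a * t - x))
      / H t (a * t - x) ^ 3 :=
    (hFxx t ht x).unique <| by
      simp_rw [hFx_eq]
      exact hasDerivAt_mul_div_sq_comp_const_sub (hHx t ht _) (hHxx t ht _) (hHpos t ht _).ne'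
  have hHline := hasDerivAt_comp_line_of_continuousOn_partials hs hHt hHx hHtc hHxc ht a x
  have hFt_eq :
      Ft t x = -(m * (Ht t (a * t - x) + a * Hx t (a * t - x))) / H t (a * t - x) ^ 2 :=
    (hFt t ht x).unique <| by
      simp_rw [hF]
      exact ((hasDerivAt_const t m).fun_div hHline (hHpos t ht _).ne').congr_deriv (by ring)
  refine eq_mul_of_heat_reflected_reciprocal hm (hHpos t ht _) (hHxpos t ht _)
    (hHheat t ht (a * t - x)) ?_
  rw [← hFt_eq, ← hFxx_eq]
  exact hFheat t ht x

theorem stmt14_general (a m : ℝ) (hm : 0 < m)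
    (H Ht Hx Hxx : ℝ → ℝ → ℝ)
    (hHpos : ∀ t ∈ Set.Ioo (0:ℝ) 1, ∀ x : ℝ, 0 < H t x)
    (hHxpos : ∀ t ∈ Set.Ioo (0:ℝ) 1, ∀ x : ℝ, 0 < Hx t x)
    (hHt : ∀ t ∈ Set.Ioo (0:ℝ) 1, ∀ x : ℝ, HasDerivAt (fun τ => H τ x) (Ht t x) t)
    (hHx : ∀ t ∈ Set.Ioo (0:ℝ) 1, ∀ x : ℝ, HasDerivAt (fun x' => H t x') (Hx t x) x)
    (hHxx : ∀ t ∈ Set.Ioo (0:ℝ) 1, ∀ x : ℝ, HasDerivAt (fun x' => Hx t x') (Hxx t x) x)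
    (hHtc : ContinuousOn (fun p : ℝ × ℝ => Ht p.1 p.2) (Set.Ioo (0:ℝ) 1 ×ˢ Set.univ))
    (hHxc : ContinuousOn (fun p : ℝ × ℝ => Hx p.1 p.2) (Set.Ioo (0:ℝ) 1 ×ˢ Set.univ))
    (hHheat : ∀ t ∈ Set.Ioo (0:ℝ) 1, ∀ x : ℝ, Ht t x + (1 / 2) * Hxx t x = 0)
    (F Ft Fx Fxx : ℝ → ℝ → ℝ)
    (hF : ∀ t x, F t x = m / H t (-x + a * t))
    (hFt : ∀ t ∈ Set.Ioo (0:ℝ) 1, ∀ x : ℝ, HasDerivAt (fun τ => F τ x) (Ft t x) t)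
    (hFx : ∀ t ∈ Set.Ioo (0:ℝ) 1, ∀ x : ℝ, HasDerivAt (fun x' => F t x') (Fx t x) x)
    (hFxx : ∀ t ∈ Set.Ioo (0:ℝ) 1, ∀ x : ℝ, HasDerivAt (fun x' => Fx t x') (Fxx t x) x)
    (hFheat : ∀ t ∈ Set.Ioo (0:ℝ) 1, ∀ x : ℝ, Ft t x + (1 / 2) * Fxx t x = 0) :
    0 < a ∧ ∃ c : ℝ, 0 < c ∧
      ∀ t ∈ Set.Ioo (0:ℝ) 1, ∀ x : ℝ, H t x = c * Real.exp (a * x - a ^ 2 * t / 2) := by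
  have hHx_eq := partialX_eq_mul_of_heat_reflected_reciprocal hm isOpen_Ioo hHpos hHxpos hHt hHx
    hHxx hHtc hHxc hHheat (fun t x => (hF t x).trans (by rw [neg_add_eq_sub])) hFt hFx hFxx hFheat
  have hhalf : (1 / 2 : ℝ) ∈ Ioo 0 1 := by norm_num
  have ha : 0 < a :=
    pos_of_mul_pos_left (hHx_eq _ hhalf 0 ▸ hHxpos _ hhalf 0) (hHpos _ hhalf 0).le
  obtain ⟨c, hc⟩ := exists_eq_mul_exp_of_heat_of_partialX_eq_mul isOpen_Ioo isPreconnected_Ioo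
    hHt hHx hHxx hHheat hHx_eq
  have hcpos : 0 < c :=
    pos_of_mul_pos_left (hc _ hhalf 0 ▸ hHpos _ hhalf 0) (Real.exp_pos _).le
  exact ⟨ha, c, hcpos, hc⟩

/-- Let `H > 0` on `(0,1) × ℝ` be twice continuously differentiable with `∂ₓH > 0`,
solving the backward heat equation `∂ₜH + (1/2)∂ₓₓH = 0`. If `F(t,x) := m/H(t, −x + a·t)`
(with `m > 0`) also solves the backward heat equation, then `a > 0` and
`H(t,x) = c·exp(a·x − a²t/2)` for some constant `c > 0`. -/
theorem stmt14 (a m : ℝ) (hm : 0 < m)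
    (H Ht Hx Hxx : ℝ → ℝ → ℝ)
    (hHpos : ∀ t ∈ Set.Ioo (0:ℝ) 1, ∀ x : ℝ, 0 < H t x)
    (hHxpos : ∀ t ∈ Set.Ioo (0:ℝ) 1, ∀ x : ℝ, 0 < Hx t x)
    (hHt : ∀ t ∈ Set.Ioo (0:ℝ) 1, ∀ x : ℝ, HasDerivAt (fun τ => H τ x) (Ht t x) t)
    (hHx : ∀ t ∈ Set.Ioo (0:ℝ) 1, ∀ x : ℝ, HasDerivAt (fun x' => H t x') (Hx t x) x)
    (hHxx : ∀ t ∈ Set.Ioo (0:ℝ) 1, ∀ x : ℝ, HasDerivAt (fun x' => Hx t x') (Hxx t x) x)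
    (hHtc : ContinuousOn (fun p : ℝ × ℝ => Ht p.1 p.2) (Set.Ioo (0:ℝ) 1 ×ˢ Set.univ))
    (hHxc : ContinuousOn (fun p : ℝ × ℝ => Hx p.1 p.2) (Set.Ioo (0:ℝ) 1 ×ˢ Set.univ))
    (hHxxc : ContinuousOn (fun p : ℝ × ℝ => Hxx p.1 p.2) (Set.Ioo (0:ℝ) 1 ×ˢ Set.univ))
    (hHheat : ∀ t ∈ Set.Ioo (0:ℝ) 1, ∀ x : ℝ, Ht t x + (1 / 2) * Hxx t x = 0)
    (F Ft Fx Fxx : ℝ → ℝ → ℝ)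
    (hF : ∀ t x, F t x = m / H t (-x + a * t))
    (hFt : ∀ t ∈ Set.Ioo (0:ℝ) 1, ∀ x : ℝ, HasDerivAt (fun τ => F τ x) (Ft t x) t)
    (hFx : ∀ t ∈ Set.Ioo (0:ℝ) 1, ∀ x : ℝ, HasDerivAt (fun x' => F t x') (Fx t x) x)
    (hFxx : ∀ t ∈ Set.Ioo (0:ℝ) 1, ∀ x : ℝ, HasDerivAt (fun x' => Fx t x') (Fxx t x) x)
    (hFheat : ∀ t ∈ Set.Ioo (0:ℝ) 1, ∀ x : ℝ, Ft t x + (1 / 2) * Fxx t x = 0) :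
    0 < a ∧ ∃ c : ℝ, 0 < c ∧
      ∀ t ∈ Set.Ioo (0:ℝ) 1, ∀ x : ℝ, H t x = c * Real.exp (a * x - a ^ 2 * t / 2) :=
  stmt14_general a m hm H Ht Hx Hxx hHpos hHxpos hHt hHx hHxx hHtc hHxc hHheat F Ft Fx Fxx hF hFt
    hFx hFxx hFheat
end
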